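/- ∫_{1/2}^∞ τ (tanh(π √(τ² − 1/4)) − 1) dτ = −1/24. -/

import Mathlib

/-!
Substituting `u = √(τ² - 1/4)` turns the integral into `∫₀^∞ u (tanh (π u) - 1) du`. Expanding
`tanh x - 1 = 2 ∑_{n ≥ 1} (-1)ⁿ e^{-2nx}` and integrating term by term against `u` gives
`(1 / 2π²) ∑_{n ≥ 1} (-1)ⁿ / n² = -η(2) / 2π² = -1/24`; the value `η(2) = π²/12` is the Fourier
series of the Bernoulli polynomial `B₂` evaluated at `1/2`.
-/

open Real MeasureTheory Set

section

variable {a : ℝ}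

theorem image_sqrt_sq_sub_sq_Ioi (ha : 0 ≤ a) : (fun τ => √(τ ^ 2 - a ^ 2)) '' Ioi a = Ioi 0 := by
  ext u
  constructor
  · rintro ⟨τ, hτ, rfl⟩
    exact sqrt_pos.mpr (by nlinarith [mem_Ioi.mp hτ])
  · intro hu
    refine ⟨√(u ^ 2 + a ^ 2), ?_, ?_⟩
    · exact (lt_sqrt ha).mpr (by nlinarith [mem_Ioi.mp hu])
    · simp [sq_sqrt (by positivity : 0 ≤ u ^ 2 + a ^ 2), sqrt_sq (le_of_lt hu)]

theorem strictMonoOn_sqrt_sq_sub_sq (ha : 0 ≤ a) :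
    StrictMonoOn (fun τ => √(τ ^ 2 - a ^ 2)) (Ioi a) :=
  fun x hx y _ hxy => sqrt_lt_sqrt (by nlinarith [mem_Ioi.mp hx]) (by nlinarith [mem_Ioi.mp hx])

theorem hasDerivAt_sqrt_sq_sub_sq {τ : ℝ} (h : a ^ 2 < τ ^ 2) :
    HasDerivAt (fun x => √(x ^ 2 - a ^ 2)) (τ / √(τ ^ 2 - a ^ 2)) τ := by
  have := ((hasDerivAt_pow 2 τ).sub_const (a ^ 2)).sqrt (by linarith)
  convert this using 1
  field_simp
  ring

theorem integral_Ioi_smul_comp_sqrt_sq_sub_sq {E : Type*} [NormedAddCommGroup E] [NormedSpace ℝ E]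
    (ha : 0 ≤ a) (g : ℝ → E) :
    ∫ τ in Ioi a, τ • g √(τ ^ 2 - a ^ 2) = ∫ u in Ioi 0, u • g u := by
  rw [← image_sqrt_sq_sub_sq_Ioi ha, integral_image_eq_integral_abs_deriv_smul measurableSet_Ioi
    (fun τ hτ => (hasDerivAt_sqrt_sq_sub_sq (by nlinarith [mem_Ioi.mp hτ])).hasDerivWithinAt)
    (strictMonoOn_sqrt_sq_sub_sq ha).injOn]
  refine setIntegral_congr_fun measurableSet_Ioi fun τ hτ => ?_
  have hs : 0 < √(τ ^ 2 - a ^ 2) := sqrt_pos.mpr (by nlinarith [mem_Ioi.mp hτ])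
  rw [smul_smul, abs_of_pos (div_pos (by linarith [mem_Ioi.mp hτ]) hs), div_mul_cancel₀ _ hs.ne']

end

theorem hasSum_neg_one_pow_succ_div_succ_sq :
    HasSum (fun n : ℕ => (-1 : ℝ) ^ (n + 1) / ((n : ℝ) + 1) ^ 2) (-(π ^ 2 / 12)) := by
  have h := hasSum_one_div_nat_pow_mul_cos one_ne_zero (x := 2⁻¹) ⟨by norm_num, by norm_num⟩
  change HasSum _ (_ * bernoulliFun 2 2⁻¹) at h
  rw [← hasSum_nat_add_iff' 1] at h
  have hsum := h.congr_fun (g := fun n : ℕ => (-1 : ℝ) ^ (n + 1) / ((n : ℝ) + 1) ^ 2) fun n => by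
    rw [show 2 * π * ((n + 1 : ℕ) : ℝ) * 2⁻¹ = ((n + 1 : ℕ) : ℝ) * π by ring, cos_nat_mul_pi]
    push_cast
    ring
  norm_num [bernoulliFun_two] at hsum
  rwa [show (2 * π) ^ 2 / 2 / 2 * (1 / 12) = π ^ 2 / 12 by ring] at hsum

theorem hasSum_tanh_sub_one {x : ℝ} (hx : 0 < x) :
    HasSum (fun n : ℕ => 2 * (-1) ^ (n + 1) * exp (-(2 * (n + 1) * x))) (tanh x - 1) := by
  set q := exp (-(2 * x))
  have hq : ‖-q‖ < 1 := by
    rw [norm_neg, norm_of_nonneg (exp_pos _).le, exp_lt_one_iff]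
    linarith
  have htanh : tanh x - 1 = 2 * (-q) * (1 - -q)⁻¹ := by
    have hexp : exp (-x) = exp x * q := by rw [← exp_add]; ring_nf
    have hq1 : 1 + q ≠ 0 := by positivity
    rw [tanh_eq_sinh_div_cosh, sinh_eq, cosh_eq, hexp, sub_neg_eq_add]
    field_simp
    ring
  rw [htanh]
  refine ((hasSum_geometric_of_norm_lt_one hq).mul_left (2 * -q)).congr_fun fun n => ?_
  rw [show -(2 * ((n : ℝ) + 1) * x) = ((n + 1 : ℕ) : ℝ) * -(2 * x) by push_cast; ring,
    exp_nat_mul, neg_pow]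
  ring

theorem integral_mul_exp_neg_mul_Ioi {c : ℝ} (hc : 0 < c) :
    ∫ u in Ioi (0 : ℝ), u * exp (-(c * u)) = 1 / c ^ 2 := by
  have h := integral_rpow_mul_exp_neg_mul_Ioi two_pos hc
  norm_num [Gamma_two] at h
  rwa [one_div]

theorem integrableOn_mul_exp_neg_mul_Ioi {c : ℝ} (hc : 0 < c) :
    IntegrableOn (fun u => u * exp (-(c * u))) (Ioi 0) :=
  .of_integral_ne_zero (by rw [integral_mul_exp_neg_mul_Ioi hc]; positivity)

theorem integral_mul_tanh_mul_sub_one {a : ℝ} (ha : 0 < a) :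
    ∫ u in Ioi (0 : ℝ), u * (tanh (a * u) - 1) = -(π ^ 2 / (24 * a ^ 2)) := by
  set F : ℕ → ℝ → ℝ := fun n u => 2 * (-1) ^ (n + 1) * (u * exp (-(2 * (n + 1) * a * u)))
  have hc (n : ℕ) : 0 < 2 * ((n : ℝ) + 1) * a := by positivity
  have hF_int (n : ℕ) : IntegrableOn (F n) (Ioi 0) :=
    (integrableOn_mul_exp_neg_mul_Ioi (hc n)).const_mul _
  have hF_integral (n : ℕ) :
      ∫ u in Ioi (0 : ℝ), F n u = 1 / (2 * a ^ 2) * ((-1) ^ (n + 1) / ((n : ℝ) + 1) ^ 2) := by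
    rw [integral_const_mul, integral_mul_exp_neg_mul_Ioi (hc n)]
    field_simp
  have hF_norm (n : ℕ) :
      ∫ u in Ioi (0 : ℝ), ‖F n u‖ = 1 / (2 * a ^ 2) * (1 / ((n : ℝ) + 1) ^ 2) := by
    have hnorm : ∀ u ∈ Ioi (0 : ℝ), ‖F n u‖ = 2 * (u * exp (-(2 * (n + 1) * a * u))) := by
      intro u hu
      rw [norm_mul, norm_of_nonneg (mul_nonneg (le_of_lt hu) (exp_pos _).le)]
      simp
    rw [setIntegral_congr_fun measurableSet_Ioi hnorm, integral_const_mul,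
      integral_mul_exp_neg_mul_Ioi (hc n)]
    field_simp
  have hsum : Summable fun n => ∫ u in Ioi (0 : ℝ), ‖F n u‖ := by
    simp_rw [hF_norm]
    refine Summable.mul_left _ ?_
    exact_mod_cast (summable_nat_add_iff 1).mpr (Real.summable_one_div_nat_pow.mpr one_lt_two)
  calc ∫ u in Ioi (0 : ℝ), u * (tanh (a * u) - 1)
      = ∫ u in Ioi (0 : ℝ), ∑' n, F n u := by
        refine setIntegral_congr_fun measurableSet_Ioi fun u hu => ?_
        refine ((hasSum_tanh_sub_one (mul_pos ha hu)).mul_left u).congr_fun (fun n => ?_)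
          |>.tsum_eq.symm
        simp only [F]
        ring_nf
    _ = ∑' n, ∫ u in Ioi (0 : ℝ), F n u :=
        (integral_tsum_of_summable_integral_norm hF_int hsum).symm
    _ = -(π ^ 2 / (24 * a ^ 2)) := by
        rw [tsum_congr hF_integral, (hasSum_neg_one_pow_succ_div_succ_sq.mul_left _).tsum_eq]
        field_simp
        ring

theorem integral_tanh_first :
    ∫ τ in Set.Ioi (1/2 : ℝ),
      τ * (Real.tanh (π * Real.sqrt (τ ^ 2 - 1/4)) - 1) = -1/24 := by
  calc _ = ∫ τ in Ioi (1/2 : ℝ), τ • (tanh (π * √(τ ^ 2 - (1/2) ^ 2)) - 1) := by norm_num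
    _ = ∫ u in Ioi (0 : ℝ), u * (tanh (π * u) - 1) :=
      integral_Ioi_smul_comp_sqrt_sq_sub_sq (by norm_num) fun u => tanh (π * u) - 1
    _ = -1/24 := by
      rw [integral_mul_tanh_mul_sub_one pi_pos]
      field_simp
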